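/- Let k0 > 0, f : ℝ³ → ℝ be integrable, R_s, R_t ∈ SO(3) with R_s·e3 ≠ R_t·e3 and R_s·e3 ≠ −R_t·e3, and d_s, d_t ∈ ℝ³. Then: (i) for every β ∈ J_{s,t} with μ_s(γ_{s,t}(β)) ≠ 0, one has e^{i⟨R_t·d_t − R_s·d_s, σ_{s,t}(β)⟩} = μ_s(γ_{s,t}(β)) / μ_t(γ_{t,s}(−β)); (ii) for every β ∈ J*_{s,t} with μ_s(γ*_{s,t}(β)) ≠ 0, one has e^{i⟨R_t·d_t − R_s·d_s, σ*_{s,t}(β)⟩} = μ_s(γ*_{s,t}(β)) / conj(μ_t(γ*_{t,s}(β))). Here γ_{t,s} and γ*_{t,s} denote the corresponding arcs with the roles of s and t swapped. -/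

import Mathlib

noncomputable section
open Real Set MeasureTheory
open scoped RealInnerProductSpace

abbrev R3 : Type := EuclideanSpace ℝ (Fin 3)
abbrev R2 : Type := EuclideanSpace ℝ (Fin 2)
abbrev Mat3 : Type := Matrix (Fin 3) (Fin 3) ℝ

def SO3 (R : Mat3) : Prop := R.transpose * R = 1 ∧ R.det = 1

def e3 : R3 := WithLp.toLp 2 (![0, 0, 1] : Fin 3 → ℝ)

def act3 (R : Mat3) (x : R3) : R3 := WithLp.toLp 2 (R.mulVec x)

def cross3 (x y : R3) : R3 := WithLp.toLp 2 (crossProduct x y)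

def rotE3 (R : Mat3) : R3 := act3 R e3

def v1 (Rs Rt : Mat3) : R3 := ‖rotE3 Rs + rotE3 Rt‖⁻¹ • (rotE3 Rs + rotE3 Rt)

def v2 (Rs Rt : Mat3) : R3 :=
  ‖cross3 (rotE3 Rs) (rotE3 Rt)‖⁻¹ • cross3 (rotE3 Rs) (rotE3 Rt)

def v3 (Rs Rt : Mat3) : R3 := ‖rotE3 Rs - rotE3 Rt‖⁻¹ • (rotE3 Rs - rotE3 Rt)

def aRad (k0 : ℝ) (Rs Rt : Mat3) : ℝ := k0 / 2 * ‖rotE3 Rs + rotE3 Rt‖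

def sigmaArc (k0 : ℝ) (Rs Rt : Mat3) (β : ℝ) : R3 :=
  (aRad k0 Rs Rt * (Real.cos β - 1)) • v1 Rs Rt + (aRad k0 Rs Rt * Real.sin β) • v2 Rs Rt

def cST (Rs Rt : Mat3) : ℝ := ⟪rotE3 Rs, rotE3 Rt⟫

def Jset (Rs Rt : Mat3) : Set ℝ :=
  if cST Rs Rt ≤ 0 then Ioc (-π) π
  else Ioo (-(Real.arccos ((cST Rs Rt - 1) / (cST Rs Rt + 1))))
    (Real.arccos ((cST Rs Rt - 1) / (cST Rs Rt + 1)))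

def kappa (k0 : ℝ) (k : R2) : ℝ := Real.sqrt (k0 ^ 2 - ‖k‖ ^ 2)

def hmap (k0 : ℝ) (k : R2) : R3 := WithLp.toLp 2 (![k 0, k 1, kappa k0 k - k0] : Fin 3 → ℝ)

def ball2 (k0 : ℝ) : Set R2 := {k | ‖k‖ < k0}

def Hemi (k0 : ℝ) (R : Mat3) : Set R3 := (fun k => act3 R (hmap k0 k)) '' ball2 k0

def aStar (k0 : ℝ) (Rs Rt : Mat3) : ℝ := k0 / 2 * ‖rotE3 Rs - rotE3 Rt‖

def sigmaStar (k0 : ℝ) (Rs Rt : Mat3) (β : ℝ) : R3 :=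
  (aStar k0 Rs Rt * (Real.cos β - 1)) • v3 Rs Rt - (aStar k0 Rs Rt * Real.sin β) • v2 Rs Rt

def JstarSet (Rs Rt : Mat3) : Set ℝ :=
  if 0 ≤ cST Rs Rt then Ioc (-π) π
  else Ioo (-(Real.arccos ((cST Rs Rt + 1) / (cST Rs Rt - 1))))
    (Real.arccos ((cST Rs Rt + 1) / (cST Rs Rt - 1)))

def P2 (x : R3) : R2 := WithLp.toLp 2 (![x 0, x 1] : Fin 2 → ℝ)

def relAxis (Rs Rt : Mat3) : R3 := act3 (Rs.transpose * Rt) e3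

def w1 (Rs Rt : Mat3) : R2 := ‖P2 (relAxis Rs Rt)‖⁻¹ • P2 (relAxis Rs Rt)

def w2 (Rs Rt : Mat3) : R2 :=
  ‖P2 (cross3 e3 (relAxis Rs Rt))‖⁻¹ • P2 (cross3 e3 (relAxis Rs Rt))

def aTilde (k0 : ℝ) (Rs Rt : Mat3) : ℝ := k0 / 2 * ‖P2 (relAxis Rs Rt)‖

def gammaArc (k0 : ℝ) (Rs Rt : Mat3) (β : ℝ) : R2 :=
  (aTilde k0 Rs Rt * (Real.cos β - 1)) • w1 Rs Rt + (aRad k0 Rs Rt * Real.sin β) • w2 Rs Rt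

def gammaStar (k0 : ℝ) (Rs Rt : Mat3) (β : ℝ) : R2 :=
  (-(aTilde k0 Rs Rt * (Real.cos β - 1))) • w1 Rs Rt
    - (aStar k0 Rs Rt * Real.sin β) • w2 Rs Rt

def gammaStarEuler (k0 φ θ β : ℝ) : R2 :=
  (-(k0 / 2 * Real.sin θ * (Real.cos β - 1))) • WithLp.toLp 2 (![Real.cos φ, Real.sin φ] : Fin 2 → ℝ)
    - (k0 * Real.sin (θ / 2) * Real.sin β) • WithLp.toLp 2 (![-Real.sin φ, Real.cos φ] : Fin 2 → ℝ)

/-- The 3D Fourier transform `𝓕f(y) = (2π)^{−3/2} ∫ f(x) e^{−i⟨x,y⟩} dx`. -/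
def FT (f : R3 → ℝ) (y : R3) : ℂ :=
  ((2 * π : ℝ) ^ (-(3 : ℝ) / 2) : ℝ) *
    ∫ x : R3, (f x : ℂ) * Complex.exp (-Complex.I * (⟪x, y⟫ : ℝ))

/-- The scaled squared energy `ν_R(k) = |𝓕f(R·h(k))|²`. -/
def nu (k0 : ℝ) (f : R3 → ℝ) (R : Mat3) (k : R2) : ℝ :=
  ‖FT f (act3 R (hmap k0 k))‖ ^ 2

def rot2 (α : ℝ) : Matrix (Fin 2) (Fin 2) ℝ :=
  !![Real.cos α, -Real.sin α; Real.sin α, Real.cos α]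

def act2 (Q : Matrix (Fin 2) (Fin 2) ℝ) (k : R2) : R2 := WithLp.toLp 2 (Q.mulVec k)

/-- The scaled measurement data `μ(k) = 𝓕f(R·h(k))·e^{−i⟨d, h(k)⟩}` for a rotation `R` and a
translation `d`. -/
def muData (k0 : ℝ) (f : R3 → ℝ) (R : Mat3) (d : R3) (k : R2) : ℂ :=
  FT f (act3 R (hmap k0 k)) * Complex.exp (-Complex.I * (⟪d, hmap k0 k⟫ : ℝ))

/-!
Work in the frame of `R_s`. The point `x = R_sᵀ σ_{s,t}(β)` satisfies `‖x‖² + 2 k0 x₂ = 0`, i.e. it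
lies on the Ewald sphere `‖x + k0 e3‖ = k0`; its height `k0 + x₂ = k0 (1 + (cos β - 1)(1 + c)/2)`,
`c = ⟨R_s e3, R_t e3⟩`, is nonnegative on `J_{s,t}`; and its horizontal projection is `γ_{s,t}(β)`.
Hence `R_s h(γ_{s,t}(β)) = σ_{s,t}(β)`, and by the symmetry `σ_{t,s}(-β) = σ_{s,t}(β)` also
`R_t h(γ_{t,s}(-β)) = σ_{s,t}(β)`: both measurements sample `𝓕f` at the same point, and their
quotient is the phase factor of the translations.

The starred arcs are the unstarred ones with `R_t` replaced by `R_t` composed with the rotation by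
`π` about the first axis, which flips `R_t e3`. There `R_t h(γ*_{t,s}(β)) = -σ*_{s,t}(β)`, and
`conj (𝓕f(-y)) = 𝓕f(y)` because `f` is real.
-/

open scoped Matrix

lemma act3_eq_toEuclideanLin (R : Mat3) (x : R3) : act3 R x = R.toEuclideanLin x := rfl

lemma act3_add (R : Mat3) (x y : R3) : act3 R (x + y) = act3 R x + act3 R y := by
  simp only [act3_eq_toEuclideanLin, map_add]

lemma act3_smul (R : Mat3) (c : ℝ) (x : R3) : act3 R (c • x) = c • act3 R x := by
  simp only [act3_eq_toEuclideanLin, map_smul]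

lemma act3_neg (R : Mat3) (x : R3) : act3 R (-x) = -act3 R x := by
  simp only [act3_eq_toEuclideanLin, map_neg]

lemma act3_act3 (R S : Mat3) (x : R3) : act3 R (act3 S x) = act3 (R * S) x := by
  simp [act3, Matrix.mulVec_mulVec]

lemma act3_one (x : R3) : act3 1 x = x := by
  simp [act3]

lemma inner_act3_left (R : Mat3) (x y : R3) : ⟪act3 R x, y⟫ = ⟪x, act3 Rᵀ y⟫ := by
  simp only [act3, EuclideanSpace.inner_eq_star_dotProduct, star_trivial,
    Matrix.dotProduct_mulVec, Matrix.mulVec_transpose]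

lemma act3_transpose_act3 {R : Mat3} (hR : Rᵀ * R = 1) (x : R3) : act3 Rᵀ (act3 R x) = x := by
  rw [act3_act3, hR, act3_one]

lemma act3_act3_transpose {R : Mat3} (hR : Rᵀ * R = 1) (x : R3) : act3 R (act3 Rᵀ x) = x := by
  rw [act3_act3, mul_eq_one_comm.mp hR, act3_one]

lemma inner_act3_act3 {R : Mat3} (hR : Rᵀ * R = 1) (x y : R3) :
    ⟪act3 R x, act3 R y⟫ = ⟪x, y⟫ := by
  rw [inner_act3_left, act3_transpose_act3 hR]

lemma norm_act3 {R : Mat3} (hR : Rᵀ * R = 1) (x : R3) : ‖act3 R x‖ = ‖x‖ := by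
  rw [norm_eq_sqrt_real_inner, norm_eq_sqrt_real_inner, inner_act3_act3 hR]

lemma transpose_mul_self_mul {R S : Mat3} (hR : Rᵀ * R = 1) (hS : Sᵀ * S = 1) :
    (R * S)ᵀ * (R * S) = 1 := by
  rw [Matrix.transpose_mul, Matrix.mul_assoc, ← Matrix.mul_assoc Rᵀ, hR, Matrix.one_mul, hS]

lemma SO3.mulVec_cross {R : Mat3} (hR : SO3 R) (x y : Fin 3 → ℝ) :
    R *ᵥ (x ⨯₃ y) = (R *ᵥ x) ⨯₃ (R *ᵥ y) := by
  -- pairing with any `w` gives a triple product, i.e. a determinant, which `R` preserves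
  have hback : ∀ v : Fin 3 → ℝ, (R *ᵥ v) ᵥ* R = v := fun v => by
    rw [← Matrix.mulVec_transpose, Matrix.mulVec_mulVec, hR.1, Matrix.one_mulVec]
  have hrows : ∀ w : Fin 3 → ℝ,
      Matrix.of ![w, R *ᵥ x, R *ᵥ y] * R = Matrix.of ![w ᵥ* R, x, y] := by
    intro w
    conv_rhs => rw [← hback x, ← hback y]
    ext i j
    fin_cases i <;> simp [Matrix.mul_apply, Matrix.vecMul, dotProduct]
  have hdot : ∀ w : Fin 3 → ℝ, w ⬝ᵥ R *ᵥ (x ⨯₃ y) = w ⬝ᵥ (R *ᵥ x) ⨯₃ (R *ᵥ y) := by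
    intro w
    have hdet := congrArg Matrix.det (hrows w)
    rw [Matrix.det_mul, hR.2, mul_one] at hdet
    rw [Matrix.dotProduct_mulVec, triple_product_eq_det, triple_product_eq_det]
    exact hdet.symm
  ext i
  simpa using hdot (Pi.single i 1)

lemma SO3.act3_cross3 {R : Mat3} (hR : SO3 R) (x y : R3) :
    act3 R (cross3 x y) = cross3 (act3 R x) (act3 R y) := by
  simp only [act3, cross3, WithLp.ofLp_toLp, hR.mulVec_cross]

lemma norm_cross3_sq (x y : R3) : ‖cross3 x y‖ ^ 2 = ‖x‖ ^ 2 * ‖y‖ ^ 2 - ⟪x, y⟫ ^ 2 := by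
  simp_rw [← real_inner_self_eq_norm_sq, cross3, EuclideanSpace.inner_eq_star_dotProduct,
    star_trivial, cross_dot_cross, dotProduct_comm (WithLp.ofLp y), sq]

lemma inner_cross3_left_self (x y : R3) : ⟪x, cross3 x y⟫ = 0 := by
  simp [cross3, EuclideanSpace.inner_eq_star_dotProduct, dotProduct_comm, dot_self_cross]

lemma inner_cross3_right_self (x y : R3) : ⟪y, cross3 x y⟫ = 0 := by
  simp [cross3, EuclideanSpace.inner_eq_star_dotProduct, dotProduct_comm, dot_cross_self]

lemma cross3_neg_right (x y : R3) : cross3 x (-y) = -cross3 x y := by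
  rw [cross3, cross3, WithLp.ofLp_neg, map_neg, WithLp.toLp_neg]

lemma cross3_swap (x y : R3) : cross3 y x = -cross3 x y := by
  rw [cross3, cross3, ← cross_anticomm, WithLp.toLp_neg]

lemma norm_sq_R3 (x : R3) : ‖x‖ ^ 2 = x 0 ^ 2 + x 1 ^ 2 + x 2 ^ 2 := by
  simp [EuclideanSpace.norm_sq_eq, Fin.sum_univ_three]

lemma norm_P2_sq (x : R3) : ‖P2 x‖ ^ 2 = x 0 ^ 2 + x 1 ^ 2 := by
  simp [EuclideanSpace.norm_sq_eq, Fin.sum_univ_two, P2]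

lemma inner_e3 (x : R3) : ⟪x, e3⟫ = x 2 := by
  simp [EuclideanSpace.inner_eq_star_dotProduct, e3, dotProduct, Fin.sum_univ_three]

lemma norm_e3 : ‖e3‖ = 1 := by
  simp [EuclideanSpace.norm_eq, e3, Fin.sum_univ_three]

lemma P2_add (x y : R3) : P2 (x + y) = P2 x + P2 y := by
  ext i; fin_cases i <;> simp [P2]

lemma P2_smul (c : ℝ) (x : R3) : P2 (c • x) = c • P2 x := by
  ext i; fin_cases i <;> simp [P2]

lemma P2_e3 : P2 e3 = 0 := by
  ext i; fin_cases i <;> simp [P2, e3]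

lemma norm_P2_cross3_e3 (u : R3) : ‖P2 (cross3 e3 u)‖ = ‖cross3 e3 u‖ := by
  rw [← sq_eq_sq₀ (norm_nonneg _) (norm_nonneg _), norm_P2_sq, norm_sq_R3]
  simp [cross3, e3, cross_apply]

lemma hmap_P2 {k0 : ℝ} {x : R3} (hsphere : ‖x‖ ^ 2 + 2 * k0 * x 2 = 0) (hupper : 0 ≤ k0 + x 2) :
    hmap k0 (P2 x) = x := by
  have hkappa : kappa k0 (P2 x) = k0 + x 2 := by
    rw [kappa, ← Real.sqrt_sq hupper, norm_P2_sq]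
    congr 1
    linear_combination -hsphere + norm_sq_R3 x
  rw [hmap, hkappa]
  ext i
  fin_cases i <;> simp [P2]

lemma norm_rotE3 {R : Mat3} (hR : Rᵀ * R = 1) : ‖rotE3 R‖ = 1 := by
  rw [rotE3, norm_act3 hR, norm_e3]

lemma act3_transpose_rotE3 (Rs Rt : Mat3) : act3 Rsᵀ (rotE3 Rt) = relAxis Rs Rt :=
  act3_act3 _ _ _

lemma rotE3_eq_act3_relAxis {Rs : Mat3} (hRs : Rsᵀ * Rs = 1) (Rt : Mat3) :
    rotE3 Rt = act3 Rs (relAxis Rs Rt) := by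
  rw [← act3_transpose_rotE3, act3_act3_transpose hRs]

lemma cST_comm (Rs Rt : Mat3) : cST Rt Rs = cST Rs Rt := real_inner_comm _ _

lemma rotE3_add_ne_zero {Rs Rt : Mat3} (hne' : rotE3 Rs ≠ -rotE3 Rt) :
    rotE3 Rs + rotE3 Rt ≠ 0 :=
  fun h => hne' (eq_neg_of_add_eq_zero_left h)

lemma norm_add_rotE3_sq {Rs Rt : Mat3} (hRs : Rsᵀ * Rs = 1) (hRt : Rtᵀ * Rt = 1) :
    ‖rotE3 Rs + rotE3 Rt‖ ^ 2 = 2 + 2 * cST Rs Rt := by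
  rw [norm_add_sq_real, norm_rotE3 hRs, norm_rotE3 hRt, cST]; ring

lemma norm_cross3_rotE3_pos {Rs Rt : Mat3} (hRs : Rsᵀ * Rs = 1) (hRt : Rtᵀ * Rt = 1)
    (hne : rotE3 Rs ≠ rotE3 Rt) (hne' : rotE3 Rs ≠ -rotE3 Rt) :
    0 < ‖cross3 (rotE3 Rs) (rotE3 Rt)‖ := by
  have hs := norm_rotE3 hRs
  have ht := norm_rotE3 hRt
  have hlt : ⟪rotE3 Rs, rotE3 Rt⟫ < 1 := (inner_lt_one_iff_real_of_norm_eq_one hs ht).mpr hne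
  have hgt : -1 < ⟪rotE3 Rs, rotE3 Rt⟫ :=
    (neg_one_le_real_inner_of_norm_eq_one hs ht).lt_of_ne
      fun h => hne' ((inner_eq_neg_one_iff_of_norm_eq_one hs ht).mp h.symm)
  have hsq := norm_cross3_sq (rotE3 Rs) (rotE3 Rt)
  rw [hs, ht] at hsq
  exact (norm_nonneg _).lt_of_ne fun h => by rw [← h] at hsq; nlinarith

open NormedSpace in
lemma v1_eq_normalize (Rs Rt : Mat3) : v1 Rs Rt = normalize (rotE3 Rs + rotE3 Rt) := rfl

open NormedSpace in
lemma v2_eq_normalize (Rs Rt : Mat3) :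
    v2 Rs Rt = normalize (cross3 (rotE3 Rs) (rotE3 Rt)) := rfl

lemma inner_v1_v2 (Rs Rt : Mat3) : ⟪v1 Rs Rt, v2 Rs Rt⟫ = 0 := by
  simp [v1, v2, real_inner_smul_left, real_inner_smul_right, inner_add_left,
    inner_cross3_left_self, inner_cross3_right_self]

lemma inner_v2_rotE3 (Rs Rt : Mat3) : ⟪v2 Rs Rt, rotE3 Rs⟫ = 0 := by
  rw [v2, real_inner_smul_left, real_inner_comm, inner_cross3_left_self, mul_zero]

lemma inner_sigmaArc_rotE3 (k0 β : ℝ) {Rs Rt : Mat3} (hRs : Rsᵀ * Rs = 1)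
    (hne' : rotE3 Rs ≠ -rotE3 Rt) :
    ⟪sigmaArc k0 Rs Rt β, rotE3 Rs⟫ = k0 / 2 * (Real.cos β - 1) * (1 + cST Rs Rt) := by
  have hpos := norm_ne_zero_iff.mpr (rotE3_add_ne_zero hne')
  have hv1 : ⟪v1 Rs Rt, rotE3 Rs⟫ = ‖rotE3 Rs + rotE3 Rt‖⁻¹ * (1 + cST Rs Rt) := by
    rw [v1, real_inner_smul_left, inner_add_left, real_inner_self_eq_norm_sq, norm_rotE3 hRs,
      real_inner_comm, cST]
    ring
  rw [sigmaArc, inner_add_left, real_inner_smul_left, real_inner_smul_left, hv1, inner_v2_rotE3,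
    mul_zero, add_zero, aRad]
  field_simp

lemma norm_sigmaArc_sq (k0 β : ℝ) {Rs Rt : Mat3} (hRs : Rsᵀ * Rs = 1) (hRt : Rtᵀ * Rt = 1)
    (hne : rotE3 Rs ≠ rotE3 Rt) (hne' : rotE3 Rs ≠ -rotE3 Rt) :
    ‖sigmaArc k0 Rs Rt β‖ ^ 2 = k0 ^ 2 * (1 + cST Rs Rt) * (1 - Real.cos β) := by
  have hv1 : ‖v1 Rs Rt‖ = 1 := by
    rw [v1_eq_normalize, NormedSpace.norm_normalize_eq_one_iff]
    exact rotE3_add_ne_zero hne'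
  have hv2 : ‖v2 Rs Rt‖ = 1 := by
    rw [v2_eq_normalize, NormedSpace.norm_normalize_eq_one_iff]
    exact norm_pos_iff.mp (norm_cross3_rotE3_pos hRs hRt hne hne')
  have hsq : ‖aRad k0 Rs Rt‖ ^ 2 = k0 ^ 2 * (2 + 2 * cST Rs Rt) / 4 := by
    rw [Real.norm_eq_abs, sq_abs, aRad, mul_pow, norm_add_rotE3_sq hRs hRt]; ring
  rw [sigmaArc, norm_add_sq_real, real_inner_smul_left, real_inner_smul_right, inner_v1_v2,
    norm_smul, norm_smul, norm_mul, norm_mul, hv1, hv2, Real.norm_eq_abs (Real.cos β - 1),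
    Real.norm_eq_abs (Real.sin β)]
  simp only [mul_one, mul_zero, add_zero, mul_pow, sq_abs]
  linear_combination hsq * ((Real.cos β - 1) ^ 2 + Real.sin β ^ 2)
    + (k0 ^ 2 * (2 + 2 * cST Rs Rt) / 4) * Real.sin_sq_add_cos_sq β

lemma P2_act3_transpose_sigmaArc (k0 β : ℝ) {Rs Rt : Mat3} (hRs : SO3 Rs)
    (hne' : rotE3 Rs ≠ -rotE3 Rt) :
    P2 (act3 Rsᵀ (sigmaArc k0 Rs Rt β)) = gammaArc k0 Rs Rt β := by
  set u := relAxis Rs Rt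
  have hv1 : P2 (act3 Rsᵀ (v1 Rs Rt)) = ‖rotE3 Rs + rotE3 Rt‖⁻¹ • P2 u := by
    rw [v1, act3_smul, act3_add, rotE3, act3_transpose_act3 hRs.1, act3_transpose_rotE3,
      P2_smul, P2_add, P2_e3, zero_add]
  have hcross : cross3 (rotE3 Rs) (rotE3 Rt) = act3 Rs (cross3 e3 u) := by
    rw [rotE3_eq_act3_relAxis hRs.1 Rt, rotE3, hRs.act3_cross3]
  have hv2 : P2 (act3 Rsᵀ (v2 Rs Rt)) = w2 Rs Rt := by
    rw [v2, hcross, norm_act3 hRs.1, act3_smul, act3_transpose_act3 hRs.1, P2_smul,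
      ← norm_P2_cross3_e3]
    rfl
  have hw1 : (aTilde k0 Rs Rt * (Real.cos β - 1)) • w1 Rs Rt
      = (k0 / 2 * (Real.cos β - 1)) • P2 u := by
    rw [aTilde, w1, mul_right_comm, mul_smul]
    exact congrArg _ (NormedSpace.norm_smul_normalize (P2 u))
  rw [sigmaArc, gammaArc, act3_add, act3_smul, act3_smul, P2_add, P2_smul, P2_smul, hv1, hv2,
    hw1, smul_smul, aRad]
  have := norm_ne_zero_iff.mpr (rotE3_add_ne_zero hne')
  congr 2
  field_simp

lemma act3_hmap_gammaArc {k0 : ℝ} (hk0 : 0 ≤ k0) {Rs Rt : Mat3} (hRs : SO3 Rs)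
    (hRt : Rtᵀ * Rt = 1) (hne : rotE3 Rs ≠ rotE3 Rt) (hne' : rotE3 Rs ≠ -rotE3 Rt) {β : ℝ}
    (hβ : 0 ≤ 1 + (Real.cos β - 1) * (1 + cST Rs Rt) / 2) :
    act3 Rs (hmap k0 (gammaArc k0 Rs Rt β)) = sigmaArc k0 Rs Rt β := by
  set x := act3 Rsᵀ (sigmaArc k0 Rs Rt β)
  have hx2 : x 2 = k0 / 2 * (Real.cos β - 1) * (1 + cST Rs Rt) := by
    rw [← inner_e3, inner_act3_left, Matrix.transpose_transpose, ← rotE3,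
      inner_sigmaArc_rotE3 k0 β hRs.1 hne']
  have hsphere : ‖x‖ ^ 2 + 2 * k0 * x 2 = 0 := by
    rw [hx2, ← norm_act3 hRs.1 x, act3_act3_transpose hRs.1,
      norm_sigmaArc_sq k0 β hRs.1 hRt hne hne']
    ring
  have hupper : 0 ≤ k0 + x 2 := by
    rw [hx2]; nlinarith [mul_nonneg hk0 hβ]
  rw [← P2_act3_transpose_sigmaArc k0 β hRs hne', hmap_P2 hsphere hupper,
    act3_act3_transpose hRs.1]

def rotPiX : Mat3 := !![1, 0, 0; 0, -1, 0; 0, 0, -1]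

lemma rotPiX_transpose_mul_self : rotPiXᵀ * rotPiX = 1 := by
  ext i j
  fin_cases i <;> fin_cases j <;> simp [rotPiX, Matrix.mul_apply, Fin.sum_univ_three]

lemma rotE3_mul_rotPiX (R : Mat3) : rotE3 (R * rotPiX) = -rotE3 R := by
  have : act3 rotPiX e3 = -e3 := by
    ext i; fin_cases i <;> simp [act3, rotPiX, e3]
  rw [rotE3, rotE3, ← act3_act3, this, act3_neg]

lemma relAxis_mul_rotPiX (Rs Rt : Mat3) : relAxis Rs (Rt * rotPiX) = -relAxis Rs Rt := by
  rw [← act3_transpose_rotE3, ← act3_transpose_rotE3, rotE3_mul_rotPiX, act3_neg]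

lemma cST_mul_rotPiX (Rs Rt : Mat3) : cST Rs (Rt * rotPiX) = -cST Rs Rt := by
  rw [cST, cST, rotE3_mul_rotPiX, inner_neg_right]

lemma gammaStar_eq_gammaArc (k0 : ℝ) (Rs Rt : Mat3) (β : ℝ) :
    gammaStar k0 Rs Rt β = gammaArc k0 Rs (Rt * rotPiX) β := by
  have hP2 : ∀ x : R3, P2 (-x) = -P2 x := fun x => by simpa using P2_smul (-1) x
  simp only [gammaStar, gammaArc, w1, w2, aTilde, aRad, aStar, relAxis_mul_rotPiX,
    rotE3_mul_rotPiX, cross3_neg_right, hP2, norm_neg, smul_neg, neg_smul, ← sub_eq_add_neg]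

lemma sigmaStar_eq_sigmaArc (k0 : ℝ) (Rs Rt : Mat3) (β : ℝ) :
    sigmaStar k0 Rs Rt β = sigmaArc k0 Rs (Rt * rotPiX) β := by
  simp only [sigmaStar, sigmaArc, v1, v2, v3, aRad, aStar, rotE3_mul_rotPiX, cross3_neg_right,
    norm_neg, smul_neg, ← sub_eq_add_neg]

lemma JstarSet_eq_Jset (Rs Rt : Mat3) : JstarSet Rs Rt = Jset Rs (Rt * rotPiX) := by
  have hquot : (-cST Rs Rt - 1) / (-cST Rs Rt + 1) = (cST Rs Rt + 1) / (cST Rs Rt - 1) := by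
    rw [← neg_div_neg_eq]; ring_nf
  simp only [JstarSet, Jset, cST_mul_rotPiX, neg_nonpos, hquot]

lemma act3_hmap_gammaStar {k0 : ℝ} (hk0 : 0 ≤ k0) {Rs Rt : Mat3} (hRs : SO3 Rs)
    (hRt : Rtᵀ * Rt = 1) (hne : rotE3 Rs ≠ rotE3 Rt) (hne' : rotE3 Rs ≠ -rotE3 Rt) {β : ℝ}
    (hβ : 0 ≤ 1 + (Real.cos β - 1) * (1 - cST Rs Rt) / 2) :
    act3 Rs (hmap k0 (gammaStar k0 Rs Rt β)) = sigmaStar k0 Rs Rt β := by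
  rw [gammaStar_eq_gammaArc, sigmaStar_eq_sigmaArc]
  refine act3_hmap_gammaArc hk0 hRs (transpose_mul_self_mul hRt rotPiX_transpose_mul_self) ?_ ?_ ?_
  · rwa [rotE3_mul_rotPiX]
  · rwa [rotE3_mul_rotPiX, neg_neg]
  · rwa [cST_mul_rotPiX, ← sub_eq_add_neg]

lemma v2_swap (Rs Rt : Mat3) : v2 Rt Rs = -v2 Rs Rt := by
  rw [v2, v2, cross3_swap, norm_neg, smul_neg]

lemma sigmaArc_swap (k0 : ℝ) (Rs Rt : Mat3) (β : ℝ) :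
    sigmaArc k0 Rt Rs (-β) = sigmaArc k0 Rs Rt β := by
  rw [sigmaArc, sigmaArc, v1, v1, aRad, aRad, add_comm (rotE3 Rt), Real.cos_neg, Real.sin_neg,
    v2_swap, mul_neg, neg_smul, smul_neg, neg_neg]

lemma sigmaStar_swap (k0 : ℝ) (Rs Rt : Mat3) (β : ℝ) :
    sigmaStar k0 Rt Rs β = -sigmaStar k0 Rs Rt β := by
  have hv3 : v3 Rt Rs = -v3 Rs Rt := by rw [v3, v3, ← neg_sub, norm_neg, smul_neg]
  have ha : aStar k0 Rt Rs = aStar k0 Rs Rt := by rw [aStar, aStar, norm_sub_rev]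
  rw [sigmaStar, sigmaStar, hv3, ha, v2_swap, smul_neg, smul_neg]
  abel

lemma one_add_cos_sub_one_mul_nonneg_of_mem_Jset {Rs Rt : Mat3} {β : ℝ}
    (hβ : β ∈ Jset Rs Rt) : 0 ≤ 1 + (Real.cos β - 1) * (1 + cST Rs Rt) / 2 := by
  rw [Jset] at hβ
  split_ifs at hβ with hc0
  · nlinarith [Real.neg_one_le_cos β,
      mul_nonneg (sub_nonneg.mpr (Real.cos_le_one β)) (neg_nonneg.mpr hc0)]
  · set c := cST Rs Rt
    have hden : 0 < c + 1 := by linarith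
    have hx : (c - 1) / (c + 1) ∈ Icc (-1 : ℝ) 1 := by
      constructor
      · rw [le_div_iff₀ hden]; linarith
      · rw [div_le_one hden]; linarith
    have hcos : (c - 1) / (c + 1) < Real.cos β := by
      calc (c - 1) / (c + 1) = Real.cos (Real.arccos ((c - 1) / (c + 1))) :=
            (Real.cos_arccos hx.1 hx.2).symm
        _ < Real.cos |β| :=
            Real.cos_lt_cos_of_nonneg_of_le_pi (abs_nonneg β) (Real.arccos_le_pi _)
              (abs_lt.mpr hβ)
        _ = Real.cos β := Real.cos_abs β
    rw [div_lt_iff₀ hden] at hcos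
    nlinarith

lemma one_add_cos_sub_one_mul_nonneg_of_mem_JstarSet {Rs Rt : Mat3} {β : ℝ}
    (hβ : β ∈ JstarSet Rs Rt) : 0 ≤ 1 + (Real.cos β - 1) * (1 - cST Rs Rt) / 2 := by
  rw [JstarSet_eq_Jset] at hβ
  have := one_add_cos_sub_one_mul_nonneg_of_mem_Jset hβ
  rwa [cST_mul_rotPiX, ← sub_eq_add_neg] at this

lemma conj_FT (f : R3 → ℝ) (y : R3) : (starRingEnd ℂ) (FT f y) = FT f (-y) := by
  rw [FT, FT, map_mul, Complex.conj_ofReal, ← integral_conj]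
  congr 2 with x
  rw [map_mul, Complex.conj_ofReal, ← Complex.exp_conj, map_mul, map_neg, Complex.conj_I,
    Complex.conj_ofReal, inner_neg_right, Complex.ofReal_neg]
  ring_nf

lemma muData_eq_of_act3_hmap (k0 : ℝ) (f : R3 → ℝ) {R : Mat3} (hR : Rᵀ * R = 1) (d : R3)
    {k : R2} {y : R3} (hy : act3 R (hmap k0 k) = y) :
    muData k0 f R d k = FT f y * Complex.exp (-Complex.I * (⟪act3 R d, y⟫ : ℝ)) := by
  rw [muData, ← hy, inner_act3_act3 hR]

lemma conj_muData_eq_of_act3_hmap (k0 : ℝ) (f : R3 → ℝ) {R : Mat3} (hR : Rᵀ * R = 1) (d : R3)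
    {k : R2} {y : R3} (hy : act3 R (hmap k0 k) = -y) :
    (starRingEnd ℂ) (muData k0 f R d k)
      = FT f y * Complex.exp (-Complex.I * (⟪act3 R d, y⟫ : ℝ)) := by
  rw [muData_eq_of_act3_hmap k0 f hR d hy, map_mul, conj_FT, neg_neg, ← Complex.exp_conj,
    map_mul, map_neg, Complex.conj_I, Complex.conj_ofReal, inner_neg_right, Complex.ofReal_neg]
  ring_nf

lemma exp_inner_sub_eq_div {F : ℂ} {a b y : R3}
    (h : F * Complex.exp (-Complex.I * (⟪a, y⟫ : ℝ)) ≠ 0) :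
    Complex.exp (Complex.I * (⟪b - a, y⟫ : ℝ))
      = F * Complex.exp (-Complex.I * (⟪a, y⟫ : ℝ))
          / (F * Complex.exp (-Complex.I * (⟪b, y⟫ : ℝ))) := by
  rw [mul_div_mul_left _ _ (left_ne_zero_of_mul h), eq_div_iff (Complex.exp_ne_zero _),
    ← Complex.exp_add, inner_sub_left, Complex.ofReal_sub]
  ring_nf

theorem phase_shift_common_circles_general (k0 : ℝ) (hk0 : 0 < k0) (f : R3 → ℝ)
    (Rs Rt : Mat3) (hRs : SO3 Rs) (hRt : SO3 Rt)
    (hne : rotE3 Rs ≠ rotE3 Rt) (hne' : rotE3 Rs ≠ -rotE3 Rt) (ds dt : R3) :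
    (∀ β ∈ Jset Rs Rt, muData k0 f Rs ds (gammaArc k0 Rs Rt β) ≠ 0 →
      Complex.exp (Complex.I * (⟪act3 Rt dt - act3 Rs ds, sigmaArc k0 Rs Rt β⟫ : ℝ))
        = muData k0 f Rs ds (gammaArc k0 Rs Rt β)
            / muData k0 f Rt dt (gammaArc k0 Rt Rs (-β))) ∧
    (∀ β ∈ JstarSet Rs Rt, muData k0 f Rs ds (gammaStar k0 Rs Rt β) ≠ 0 →
      Complex.exp (Complex.I * (⟪act3 Rt dt - act3 Rs ds, sigmaStar k0 Rs Rt β⟫ : ℝ))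
        = muData k0 f Rs ds (gammaStar k0 Rs Rt β)
            / (starRingEnd ℂ) (muData k0 f Rt dt (gammaStar k0 Rt Rs β))) := by
  have hne_ts : rotE3 Rt ≠ rotE3 Rs := hne.symm
  have hne'_ts : rotE3 Rt ≠ -rotE3 Rs := fun h => hne' (by rw [h, neg_neg])
  refine ⟨fun β hβ hμ => ?_, fun β hβ hμ => ?_⟩
  · have hcos := one_add_cos_sub_one_mul_nonneg_of_mem_Jset hβ
    have hs := act3_hmap_gammaArc hk0.le hRs hRt.1 hne hne' hcos
    have ht : act3 Rt (hmap k0 (gammaArc k0 Rt Rs (-β))) = sigmaArc k0 Rs Rt β := by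
      rw [act3_hmap_gammaArc hk0.le hRt hRs.1 hne_ts hne'_ts (by rwa [Real.cos_neg, cST_comm]),
        sigmaArc_swap]
    rw [muData_eq_of_act3_hmap k0 f hRs.1 ds hs] at hμ ⊢
    rw [muData_eq_of_act3_hmap k0 f hRt.1 dt ht]
    exact exp_inner_sub_eq_div hμ
  · have hcos := one_add_cos_sub_one_mul_nonneg_of_mem_JstarSet hβ
    have hs := act3_hmap_gammaStar hk0.le hRs hRt.1 hne hne' hcos
    have ht : act3 Rt (hmap k0 (gammaStar k0 Rt Rs β)) = -sigmaStar k0 Rs Rt β := by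
      rw [act3_hmap_gammaStar hk0.le hRt hRs.1 hne_ts hne'_ts (by rwa [cST_comm]),
        sigmaStar_swap]
    rw [muData_eq_of_act3_hmap k0 f hRs.1 ds hs] at hμ ⊢
    rw [conj_muData_eq_of_act3_hmap k0 f hRt.1 dt ht]
    exact exp_inner_sub_eq_div hμ

/-- Lemma: complex phase shift along the common circles.
(i) For `β ∈ J_{s,t}` with `μ_s(γ_{s,t}(β)) ≠ 0`,
`e^{i⟨R_t d_t − R_s d_s, σ_{s,t}(β)⟩} = μ_s(γ_{s,t}(β)) / μ_t(γ_{t,s}(−β))`.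
(ii) For `β ∈ J*_{s,t}` with `μ_s(γ*_{s,t}(β)) ≠ 0`,
`e^{i⟨R_t d_t − R_s d_s, σ*_{s,t}(β)⟩} = μ_s(γ*_{s,t}(β)) / conj(μ_t(γ*_{t,s}(β)))`. -/
theorem phase_shift_common_circles (k0 : ℝ) (hk0 : 0 < k0) (f : R3 → ℝ)
    (hf : MeasureTheory.Integrable f) (Rs Rt : Mat3) (hRs : SO3 Rs) (hRt : SO3 Rt)
    (hne : rotE3 Rs ≠ rotE3 Rt) (hne' : rotE3 Rs ≠ -rotE3 Rt) (ds dt : R3) :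
    (∀ β ∈ Jset Rs Rt, muData k0 f Rs ds (gammaArc k0 Rs Rt β) ≠ 0 →
      Complex.exp (Complex.I * (⟪act3 Rt dt - act3 Rs ds, sigmaArc k0 Rs Rt β⟫ : ℝ))
        = muData k0 f Rs ds (gammaArc k0 Rs Rt β)
            / muData k0 f Rt dt (gammaArc k0 Rt Rs (-β))) ∧
    (∀ β ∈ JstarSet Rs Rt, muData k0 f Rs ds (gammaStar k0 Rs Rt β) ≠ 0 →
      Complex.exp (Complex.I * (⟪act3 Rt dt - act3 Rs ds, sigmaStar k0 Rs Rt β⟫ : ℝ))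
        = muData k0 f Rs ds (gammaStar k0 Rs Rt β)
            / (starRingEnd ℂ) (muData k0 f Rt dt (gammaStar k0 Rt Rs β))) :=
  phase_shift_common_circles_general k0 hk0 f Rs Rt hRs hRt hne hne' ds dt
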